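/- arXiv:2003.06450 — 9 statements merged into one kernel-verified Lean document; each statement's English description precedes it below -/
import Mathlib

section
/- Let d ≥ 2 and b ≥ 1 be integers and define T(z) = (1−(d−1)z)^{−1/(d−1)} − 1 for real z < 1/(d−1). Then for every z < 1/(d−1) the b-th derivative of T satisfies T^{(b)}(z) = (b−1)!·(d−1)^{b−1}·C(b−1+1/(d−1), b−1)·(1+T(z))^{b(d−1)+1}; moreover T(0) = 0 and T^{(k)}(0) = (k−1)!·(d−1)^{k−1}·C(k−1+1/(d−1), k−1) for every 1 ≤ k ≤ b−1. (This verifies that T is the exponential generating function of (b,d)-ary increasing trees.) -/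
/-- The generalized binomial coefficient `C(x, n) = x(x-1)⋯(x-n+1)/n!`. -/
noncomputable def genBinom (x : ℝ) (n : ℕ) : ℝ :=
    (∏ i ∈ Finset.range n, (x - i)) / (n.factorial : ℝ)

lemma aux_deriv (c : ℝ) (z : ℝ) (hz : 0 < 1 - c * z) (p : ℝ) :
    HasDerivAt (fun z : ℝ => (1 - c * z) ^ p) (c * (-p) * (1 - c * z) ^ (p - 1)) z := by
  have h1 : HasDerivAt (fun z : ℝ => 1 - c * z) (-c) z := by
    simpa using ((hasDerivAt_id z).const_mul c).const_sub 1
  have h2 := h1.rpow_const (p := p) (Or.inl (ne_of_gt hz))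
  convert h2 using 1
  ring

lemma iter_formula (c : ℝ) (n : ℕ) :
    ∀ z : ℝ, 0 < 1 - c * z →
      iteratedDeriv (n + 1) (fun z : ℝ => (1 - c * z) ^ (-(1/c)) - 1) z
        = c ^ (n+1) * (∏ i ∈ Finset.range (n+1), (1/c + i)) * (1 - c * z) ^ (-(1/c) - (n+1)) := by
  induction n with
  | zero =>
    intro z hz
    rw [iteratedDeriv_one]
    have h := ((aux_deriv c z hz (-(1/c))).sub_const 1).deriv
    rw [h, Finset.prod_range_one]
    push_cast
    ring_nf
  | succ n ih =>
    intro z hz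
    have hopen : IsOpen {z : ℝ | 0 < 1 - c * z} := by
      have hcont : Continuous fun z : ℝ => 1 - c * z := by continuity
      exact isOpen_lt continuous_const hcont
    rw [iteratedDeriv_succ]
    have hev : iteratedDeriv (n+1) (fun z : ℝ => (1 - c * z) ^ (-(1/c)) - 1)
        =ᶠ[nhds z] fun y => c ^ (n+1) * (∏ i ∈ Finset.range (n+1), (1/c + i)) * (1 - c * y) ^ (-(1/c) - (n+1)) := by
      filter_upwards [hopen.mem_nhds hz] with y hy using ih y hy
    rw [hev.deriv_eq]
    have h := ((aux_deriv c z hz (-(1/c) - (n+1))).const_mul (c ^ (n+1) * ∏ i ∈ Finset.range (n+1), (1/c + i))).deriv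
    have hp : ∏ i ∈ Finset.range (n+1+1), (1/c + (i:ℝ)) = (∏ i ∈ Finset.range (n+1), (1/c + (i:ℝ))) * (1/c + ((n+1:ℕ):ℝ)) :=
      Finset.prod_range_succ _ _
    have he : -(1/c) - ((n:ℝ)+1) - 1 = -(1/c) - (((n+1:ℕ):ℝ)+1) := by push_cast; ring
    rw [h, he, hp]
    push_cast
    ring

lemma prod_shift (α : ℝ) (m : ℕ) :
    ∏ i ∈ Finset.range (m+1), (α + (i:ℝ)) = α * ∏ i ∈ Finset.range m, ((m:ℝ) + α - i) := by
  induction m with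
  | zero => simp
  | succ m ih =>
    rw [Finset.prod_range_succ, ih, Finset.prod_range_succ']
    have h : ∀ i ∈ Finset.range m, ((m+1:ℕ):ℝ) + α - ((i+1:ℕ):ℝ) = (m:ℝ) + α - i := by
      intro i _; push_cast; ring
    rw [Finset.prod_congr rfl h]
    push_cast; ring

lemma coeff_eq (c : ℝ) (hc : c ≠ 0) (m : ℕ) :
    (m.factorial : ℝ) * c ^ m * genBinom ((m:ℝ) + 1/c) m = c ^ (m+1) * ∏ i ∈ Finset.range (m+1), (1/c + (i:ℝ)) := by
  rw [genBinom, prod_shift]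
  have hf : (m.factorial : ℝ) ≠ 0 := Nat.cast_ne_zero.mpr m.factorial_ne_zero
  field_simp
  ring

/-- For integers `d ≥ 2` and `b ≥ 1`, the function `T(z) = (1-(d-1)z)^{-1/(d-1)} - 1`
(the exponential generating function of `(b,d)`-ary increasing trees) satisfies, for every
`z < 1/(d-1)`, the ODE `T^{(b)}(z) = (b-1)!·(d-1)^{b-1}·C(b-1+1/(d-1), b-1)·(1+T(z))^{b(d-1)+1}`
together with `T(0) = 0` and `T^{(k)}(0) = (k-1)!·(d-1)^{k-1}·C(k-1+1/(d-1), k-1)` for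
`1 ≤ k ≤ b-1`. -/
theorem bdary_egf_ode (b d : ℕ) (hb : 1 ≤ b) (hd : 2 ≤ d) :
    (∀ z : ℝ, z < 1 / ((d : ℝ) - 1) →
      iteratedDeriv b (fun z : ℝ => (1 - ((d : ℝ) - 1) * z) ^ (-(1 / ((d : ℝ) - 1))) - 1) z
        = ((b - 1).factorial : ℝ) * ((d : ℝ) - 1) ^ (b - 1)
            * genBinom ((b : ℝ) - 1 + 1 / ((d : ℝ) - 1)) (b - 1)
            * (1 + ((1 - ((d : ℝ) - 1) * z) ^ (-(1 / ((d : ℝ) - 1))) - 1)) ^ (b * (d - 1) + 1)) ∧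
    ((1 - ((d : ℝ) - 1) * (0 : ℝ)) ^ (-(1 / ((d : ℝ) - 1))) - 1 = 0) ∧
    (∀ k : ℕ, 1 ≤ k → k ≤ b - 1 →
      iteratedDeriv k (fun z : ℝ => (1 - ((d : ℝ) - 1) * z) ^ (-(1 / ((d : ℝ) - 1))) - 1) 0
        = ((k - 1).factorial : ℝ) * ((d : ℝ) - 1) ^ (k - 1)
            * genBinom ((k : ℝ) - 1 + 1 / ((d : ℝ) - 1)) (k - 1)) := by
  set c : ℝ := (d : ℝ) - 1 with hc_def
  have hdc : (2:ℝ) ≤ (d:ℝ) := by exact_mod_cast hd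
  have hcpos : 0 < c := by simp only [hc_def]; linarith
  have hc : c ≠ 0 := ne_of_gt hcpos
  refine ⟨?_, ?_, ?_⟩
  · intro z hz
    have hz' : 0 < 1 - c * z := by
      have := (lt_div_iff₀ hcpos).mp hz
      nlinarith
    obtain ⟨m, rfl⟩ : ∃ m, b = m + 1 := ⟨b - 1, (Nat.succ_pred_eq_of_pos hb).symm⟩
    rw [iter_formula c m z hz']
    have hm : (m + 1 - 1 : ℕ) = m := rfl
    rw [hm]
    have hb1 : ((m+1:ℕ):ℝ) - 1 = (m:ℝ) := by push_cast; ring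
    rw [hb1]
    have h1T : 1 + ((1 - c * z) ^ (-(1/c)) - 1) = (1 - c * z) ^ (-(1/c)) := by ring
    rw [h1T]
    have hpow : ((1 - c * z) ^ (-(1/c))) ^ ((m+1) * (d - 1) + 1 : ℕ)
        = (1 - c * z) ^ (-(1/c) - ((m:ℝ)+1)) := by
      rw [← Real.rpow_natCast ((1 - c * z) ^ (-(1/c))), ← Real.rpow_mul (le_of_lt hz')]
      congr 1
      have hcast : (((m+1) * (d - 1) + 1 : ℕ) : ℝ) = ((m:ℝ)+1) * c + 1 := by
        have : ((d - 1 : ℕ) : ℝ) = c := by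
          rw [hc_def]; push_cast [Nat.cast_sub (le_of_lt (lt_of_lt_of_le one_lt_two hd))]; ring
        push_cast [this]
        ring
      rw [hcast]
      field_simp
      ring
    rw [hpow, ← coeff_eq c hc m]
  · simp [Real.one_rpow]
  · intro k hk1 hk2
    have hz' : (0:ℝ) < 1 - c * 0 := by simp
    obtain ⟨j, rfl⟩ : ∃ j, k = j + 1 := ⟨k - 1, (Nat.succ_pred_eq_of_pos hk1).symm⟩
    rw [iter_formula c j 0 hz']
    have hm : (j + 1 - 1 : ℕ) = j := rfl
    rw [hm]
    have hb1 : ((j+1:ℕ):ℝ) - 1 = (j:ℝ) := by push_cast; ring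
    rw [hb1, ← coeff_eq c hc j]
    simp [Real.one_rpow]
end

section
/- Let α > 0 be real and b ≥ 1 an integer, and define T(z) = 1 − (1−(α+1)z)^{1/(α+1)} for real z < 1/(α+1). Then for every z < 1/(α+1) the b-th derivative of T satisfies T^{(b)}(z) = (b−1)!·(α+1)^{b−1}·C(b−1−1/(α+1), b−1)·(1−T(z))^{−((α+1)b−1)}; moreover T(0) = 0 and T^{(k)}(0) = (k−1)!·(α+1)^{k−1}·C(k−1−1/(α+1), k−1) for every 1 ≤ k ≤ b−1. (This verifies that T is the exponential generating function of (b,α)-plane oriented recursive trees.) -/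
open Polynomial Nat

theorem iteratedDeriv_comp_mul_left {𝕜 F : Type*} [NontriviallyNormedField 𝕜] [NormedAddCommGroup F]
    [NormedSpace 𝕜 F] (f : 𝕜 → F) (c : 𝕜) (n : ℕ) :
    iteratedDeriv n (fun x => f (c * x)) = fun x => c ^ n • iteratedDeriv n f (c * x) := by
  induction n with
  | zero => simp
  | succ n ih =>
    funext x
    rw [iteratedDeriv_succ, ih, iteratedDeriv_succ, deriv_fun_const_smul_field,
      deriv_comp_mul_left, smul_smul, pow_succ]

theorem iteratedDeriv_rpow_one_sub_mul (c p : ℝ) (n : ℕ) (z : ℝ) :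
    iteratedDeriv n (fun z => (1 - c * z) ^ p) z
      = (-c) ^ n * (descPochhammer ℝ n).eval p * (1 - c * z) ^ (p - n) := by
  rw [iteratedDeriv_comp_mul_left (fun w => (1 - w) ^ p),
    iteratedDeriv_comp_const_sub n (fun w : ℝ => w ^ p) 1]
  beta_reduce
  rw [iteratedDeriv_eq_iterate, Real.iter_deriv_rpow_const, smul_eq_mul, smul_eq_mul, neg_pow]
  ring

theorem descPochhammer_eval_eq_factorial_mul_genBinom (x : ℝ) (n : ℕ) :
    (descPochhammer ℝ n).eval x = n ! * genBinom x n := by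
  rw [descPochhammer_eval_eq_prod_range, genBinom, mul_div_cancel₀ _ (by positivity)]

theorem descPochhammer_succ_eval_eq_genBinom (p : ℝ) (n : ℕ) :
    (descPochhammer ℝ (n + 1)).eval p = (-1) ^ n * p * (n ! * genBinom (n - p) n) := by
  rw [descPochhammer_succ_left, eval_mul, eval_X, eval_comp, eval_sub, eval_X, eval_one,
    descPochhammer_eval_eq_ascPochhammer, show p - 1 - n + 1 = -(n - p) by ring,
    ascPochhammer_eval_neg_eq_descPochhammer, descPochhammer_eval_eq_factorial_mul_genBinom]
  ring

theorem iteratedDeriv_succ_one_sub_rpow_inv (c : ℝ) (hc : c ≠ 0) (n : ℕ) (z : ℝ) :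
    iteratedDeriv (n + 1) (fun z => 1 - (1 - c * z) ^ (1 / c)) z
      = n ! * c ^ n * genBinom (n - 1 / c) n * (1 - c * z) ^ (1 / c - (n + 1)) := by
  rw [iteratedDeriv_const_sub n.add_one_pos, iteratedDeriv_neg, iteratedDeriv_rpow_one_sub_mul,
    descPochhammer_succ_eval_eq_genBinom]
  push_cast
  have hsign : ((-1 : ℝ) ^ n) ^ 2 = 1 := by rw [← pow_mul, mul_comm, pow_mul, neg_one_sq, one_pow]
  calc _ = ((-1 : ℝ) ^ n) ^ 2 * (c * (1 / c)) * (n ! * c ^ n * genBinom (n - 1 / c) n)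
        * (1 - c * z) ^ (1 / c - (n + 1)) := by ring
    _ = _ := by rw [hsign, mul_one_div_cancel hc]; ring

/-- For real `α > 0` and integer `b ≥ 1`, the function `T(z) = 1 - (1-(α+1)z)^{1/(α+1)}`
(the exponential generating function of `(b,α)`-plane oriented recursive trees) satisfies,
for every `z < 1/(α+1)`, the ODE
`T^{(b)}(z) = (b-1)!·(α+1)^{b-1}·C(b-1-1/(α+1), b-1)·(1-T(z))^{-((α+1)b-1)}`
together with `T(0) = 0` and `T^{(k)}(0) = (k-1)!·(α+1)^{k-1}·C(k-1-1/(α+1), k-1)` for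
`1 ≤ k ≤ b-1`. -/
theorem bport_egf_ode (b : ℕ) (hb : 1 ≤ b) (α : ℝ) (hα : 0 < α) :
    (∀ z : ℝ, z < 1 / (α + 1) →
      iteratedDeriv b (fun z : ℝ => 1 - (1 - (α + 1) * z) ^ (1 / (α + 1))) z
        = ((b - 1).factorial : ℝ) * (α + 1) ^ (b - 1)
            * genBinom ((b : ℝ) - 1 - 1 / (α + 1)) (b - 1)
            * (1 - (1 - (1 - (α + 1) * z) ^ (1 / (α + 1)))) ^ (-((α + 1) * b - 1))) ∧
    (1 - (1 - (α + 1) * (0 : ℝ)) ^ (1 / (α + 1)) = 0) ∧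
    (∀ k : ℕ, 1 ≤ k → k ≤ b - 1 →
      iteratedDeriv k (fun z : ℝ => 1 - (1 - (α + 1) * z) ^ (1 / (α + 1))) 0
        = ((k - 1).factorial : ℝ) * (α + 1) ^ (k - 1)
            * genBinom ((k : ℝ) - 1 - 1 / (α + 1)) (k - 1)) := by
  have hc : 0 < α + 1 := by linarith
  refine ⟨fun z hz => ?_, by simp, fun k hk _ => ?_⟩
  · obtain ⟨n, rfl⟩ : ∃ n, b = n + 1 := ⟨b - 1, by omega⟩
    have hbase : 0 ≤ 1 - (α + 1) * z := by rw [lt_div_iff₀ hc] at hz; linarith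
    rw [iteratedDeriv_succ_one_sub_rpow_inv _ hc.ne', sub_sub_cancel, ← Real.rpow_mul hbase]
    push_cast
    congr 3
    · ring
    · field_simp
      ring
  · obtain ⟨n, rfl⟩ : ∃ n, k = n + 1 := ⟨k - 1, by omega⟩
    rw [iteratedDeriv_succ_one_sub_rpow_inv _ hc.ne']
    simp
end

section
/- Let d ≥ 2 be an integer and z a real number with |z| < 1/(d−1). Then the series ∑_{n≥1} (d−1)^{n−1}·C(n−1+1/(d−1), n−1)·z^n/n converges and its sum equals (1−(d−1)z)^{−1/(d−1)} − 1. Equivalently, the total weight of (b,d)-ary increasing trees of size n is T_n = (n−1)!·(d−1)^{n−1}·C(n−1+1/(d−1), n−1), i.e. T_n/n! is the n-th Taylor coefficient of (1−(d−1)z)^{−1/(d−1)} − 1 at z = 0. -/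
theorem genBinom_eq_ringChoose (x : ℝ) (n : ℕ) : genBinom x n = Ring.choose x n := by
  rw [Ring.choose_eq_smul, genBinom, smul_eq_mul, div_eq_inv_mul,
    Polynomial.descPochhammer_smeval_eq_ascPochhammer, Polynomial.ascPochhammer_smeval_cast,
    Polynomial.ascPochhammer_smeval_eq_eval, ← descPochhammer_eval_eq_ascPochhammer,
    descPochhammer_eval_eq_prod_range]

@[simp]
theorem genBinom_zero (x : ℝ) : genBinom x 0 = 1 := by
  simp [genBinom]

theorem genBinom_succ (x : ℝ) (n : ℕ) :
    genBinom x (n + 1) = genBinom x n * (x - n) / (n + 1) := by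
  rw [genBinom, genBinom, Finset.prod_range_succ, Nat.factorial_succ, Nat.cast_mul]
  field_simp
  push_cast
  ring

theorem hasSum_genBinom_mul_pow (a : ℝ) {x : ℝ} (hx : |x| < 1) :
    HasSum (fun n : ℕ => genBinom (a + n - 1) n * x ^ n) ((1 - x) ^ (-a)) := by
  have hmem : x ∈ Metric.eball (0 : ℝ) 1 := by simpa [Metric.mem_eball, edist_dist] using hx
  have h := (Real.one_div_one_sub_rpow_hasFPowerSeriesOnBall_zero a).hasSum hmem
  rw [zero_add, one_div, ← Real.rpow_neg (by linarith [abs_lt.1 hx])] at h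
  simpa [FormalMultilinearSeries.ofScalars_apply_eq, genBinom_eq_ringChoose, mul_comm] using h

theorem hasSum_mul_genBinom_mul_pow_succ_div (a : ℝ) {x : ℝ} (hx : |x| < 1) :
    HasSum (fun m : ℕ => a * genBinom (m + a) m * x ^ (m + 1) / (m + 1))
      ((1 - x) ^ (-a) - 1) := by
  have hterm (m : ℕ) : genBinom (a + ((m : ℝ) + 1) - 1) (m + 1) * x ^ (m + 1)
      = a * genBinom (m + a) m * x ^ (m + 1) / (m + 1) := by
    rw [add_sub_assoc, add_sub_cancel_right, add_comm a, genBinom_succ, add_sub_cancel_left]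
    ring
  simpa [hterm] using (hasSum_nat_add_iff' 1).2 (hasSum_genBinom_mul_pow a hx)

theorem bdary_total_weights_general (d : ℕ) (z : ℝ) (hz : |z| < 1 / ((d : ℝ) - 1)) :
    HasSum
      (fun m : ℕ => ((d : ℝ) - 1) ^ m * genBinom ((m : ℝ) + 1 / ((d : ℝ) - 1)) m
        * z ^ (m + 1) / ((m : ℝ) + 1))
      ((1 - ((d : ℝ) - 1) * z) ^ (-(1 / ((d : ℝ) - 1))) - 1) := by
  have hd : 0 < (d : ℝ) - 1 := one_div_pos.1 ((abs_nonneg z).trans_lt hz)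
  have hx : |((d : ℝ) - 1) * z| < 1 := by
    rwa [abs_mul, abs_of_pos hd, ← lt_div_iff₀' hd]
  convert hasSum_mul_genBinom_mul_pow_succ_div (1 / ((d : ℝ) - 1)) hx using 2 with m
  rw [mul_pow, pow_succ]
  field_simp
  ring

/-- For an integer `d ≥ 2` and real `z` with `|z| < 1/(d-1)`, the series
`∑_{n ≥ 1} (d-1)^{n-1} · C(n-1+1/(d-1), n-1) · z^n / n` converges with sum
`(1-(d-1)z)^{-1/(d-1)} - 1`; i.e. the total weight of `(b,d)`-ary increasing trees of size `n`
is `T_n = (n-1)!·(d-1)^{n-1}·C(n-1+1/(d-1), n-1)`.  (Here the sum is indexed by `n = m+1`,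
`m ∈ ℕ`.) -/
theorem bdary_total_weights (d : ℕ) (hd : 2 ≤ d) (z : ℝ) (hz : |z| < 1 / ((d : ℝ) - 1)) :
    HasSum
      (fun m : ℕ => ((d : ℝ) - 1) ^ m * genBinom ((m : ℝ) + 1 / ((d : ℝ) - 1)) m
        * z ^ (m + 1) / ((m : ℝ) + 1))
      ((1 - ((d : ℝ) - 1) * z) ^ (-(1 / ((d : ℝ) - 1))) - 1) :=
  bdary_total_weights_general d z hz
end

section
/- Let b ≥ 1 be an integer, κ > −1 a real number, and let λ_1,…,λ_b be pairwise distinct complex numbers with λ_1 = 1+κ such that each λ_j satisfies the indicial equation λ_j(λ_j+1)⋯(λ_j+b−1) = (1+κ)(2+κ)⋯(b+κ), with Re λ_j < 1+κ for 2 ≤ j ≤ b, and with ∑_{k=0}^{b−1} 1/(λ_j+k) ≠ 0 for every j. Fix an integer m with 1 ≤ m ≤ b, and for each n ≥ 1 set P_n(m) = ∑_{j=1}^{b} [C(λ_j+n−2, n−1)·C(λ_j+b−1, b−m)·C(m−1+κ, m−1)] / [C(n−1+κ, n−1)·C(b, m−1)·(b−m+1)·C(b+κ, b)·∑_{k=0}^{b−1}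 1/(λ_j+k)]. Then, as n → ∞, P_n(m) converges to C(b+κ, b−m)·C(m−1+κ, m−1) / [C(b, m−1)·(b−m+1)·C(b+κ, b)·∑_{k=1}^{b} 1/(κ+k)]. (For κ = 1/(d−1) this is the convergence of the probability mass function of the initial bucket size K_n in (b,d)-ary increasing trees to its discrete limit law, and for κ = −1/(α+1) the same for (b,α)-plane oriented recursive trees.) -/
/-
Both binomial coefficients depending on `n` are rising factorials divided by `n!`, so the `j`-th
summand of `P_n(m)` is `∏_{k<n} (λ_j + k) / ∏_{k<n} (1 + κ + k)` times a constant. This ratio is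
identically `1` for `λ_1 = 1 + κ`, while for `j ≥ 2` Euler's limit formula for `Γ` shows that it
behaves like `n^(λ_j - 1 - κ) Γ(1 + κ) / Γ(λ_j)`, which tends to `0` because `Re λ_j < 1 + κ`.
Only the `j = 1` summand survives in the limit.
-/

open Filter

/-- The generalized binomial coefficient `C(x, n) = x(x-1)⋯(x-n+1)/n!` over `ℂ`. -/
noncomputable def genBinomC (x : ℂ) (n : ℕ) : ℂ :=
    (∏ i ∈ Finset.range n, (x - i)) / (n.factorial : ℂ)

open Finset Topology

lemma genBinomC_add_natCast_sub_one (w : ℂ) (n : ℕ) :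
    genBinomC (w + n - 1) n = (∏ k ∈ range n, (w + k)) / n.factorial := by
  rw [genBinomC, ← prod_range_reflect (fun k => w + (k : ℂ)) n]
  congr 1
  refine prod_congr rfl fun i hi => ?_
  rw [mem_range] at hi
  rw [Nat.sub_sub, Nat.cast_sub (by omega)]
  push_cast
  ring

lemma genBinomC_add_natCast_sub_one_div_genBinomC (z κ : ℂ) (n : ℕ) :
    genBinomC (z + n - 1) n / genBinomC (n + κ) n
      = (∏ k ∈ range n, (z + k)) / ∏ k ∈ range n, (1 + κ + k) := by
  rw [show (n : ℂ) + κ = 1 + κ + n - 1 by ring, genBinomC_add_natCast_sub_one,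
    genBinomC_add_natCast_sub_one,
    div_div_div_cancel_right₀ (Nat.cast_ne_zero.mpr n.factorial_ne_zero)]

lemma tendsto_natCast_cpow_atTop_zero {s : ℂ} (hs : s.re < 0) :
    Tendsto (fun n : ℕ => (n : ℂ) ^ s) atTop (𝓝 0) := by
  rw [tendsto_zero_iff_norm_tendsto_zero]
  have hreal : Tendsto (fun x : ℝ => x ^ s.re) atTop (𝓝 0) := by
    simpa using tendsto_rpow_neg_atTop (y := -s.re) (by linarith)
  refine (hreal.comp tendsto_natCast_atTop_atTop).congr' ?_
  filter_upwards [eventually_ge_atTop 1] with n hn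
  exact (Complex.norm_natCast_cpow_of_pos hn _).symm

lemma prod_range_succ_add_div_mul_GammaSeq {z : ℂ} (hz : ∀ k : ℕ, z + k ≠ 0) (w : ℂ) {n : ℕ}
    (hn : n ≠ 0) :
    (∏ k ∈ range (n + 1), (z + k)) / (∏ k ∈ range (n + 1), (w + k)) * Complex.GammaSeq z n
      = (n : ℂ) ^ (z - w) * Complex.GammaSeq w n := by
  have hPz : ∏ k ∈ range (n + 1), (z + k) ≠ 0 := prod_ne_zero_iff.mpr fun k _ => hz k
  have hnw : (n : ℂ) ^ w ≠ 0 := by simp [hn]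
  rw [Complex.GammaSeq, Complex.GammaSeq, Complex.cpow_sub _ _ (Nat.cast_ne_zero.mpr hn)]
  field_simp

lemma tendsto_prod_range_add_div_prod_range_add {z w : ℂ} (h : z.re < w.re) :
    Tendsto (fun n => (∏ k ∈ range n, (z + k)) / ∏ k ∈ range n, (w + k)) atTop (𝓝 0) := by
  by_cases hpole : ∃ k : ℕ, z + k = 0
  · obtain ⟨k, hk⟩ := hpole
    refine tendsto_const_nhds.congr' ?_
    filter_upwards [eventually_gt_atTop k] with n hn
    rw [prod_eq_zero (mem_range.mpr hn) hk, zero_div]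
  push Not at hpole
  have hΓ : Complex.Gamma z ≠ 0 :=
    Complex.Gamma_ne_zero fun k hk => hpole k (by rw [hk]; ring)
  have hG := Complex.GammaSeq_tendsto_Gamma z
  have hlim := ((tendsto_natCast_cpow_atTop_zero (s := z - w) (by simpa using h)).mul
    (Complex.GammaSeq_tendsto_Gamma w)).div hG hΓ
  rw [zero_mul, zero_div] at hlim
  rw [← tendsto_add_atTop_iff_nat 1]
  refine hlim.congr' ?_
  filter_upwards [eventually_ne_atTop 0, hG.eventually_ne hΓ] with n hn hGn
  rw [Pi.div_apply, div_eq_iff hGn, prod_range_succ_add_div_mul_GammaSeq hpole w hn]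

lemma tendsto_sum_mul_of_tendsto_single {ι R α : Type*} [Fintype ι] [DecidableEq ι]
    [Semiring R] [TopologicalSpace R] [IsTopologicalSemiring R] {l : Filter α}
    {f : ι → α → R} (i₀ : ι) (h₀ : Tendsto (f i₀) l (𝓝 1))
    (h : ∀ i ≠ i₀, Tendsto (f i) l (𝓝 0)) (c : ι → R) :
    Tendsto (fun x => ∑ i, f i x * c i) l (𝓝 (c i₀)) := by
  have hterm : ∀ i, Tendsto (fun x => f i x * c i) l (𝓝 (if i = i₀ then c i else 0)) := by
    intro i
    by_cases hi : i = i₀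
    · subst hi
      simpa using h₀.mul_const (c i)
    · simpa [hi] using (h i hi).mul_const (c i)
  simpa using tendsto_finsetSum univ fun i _ => hterm i

theorem initial_bucket_size_limit_law_general (b : ℕ) (hb : 1 ≤ b) (κ : ℝ) (hκ : -1 < κ)
    (lam : Fin b → ℂ)
    (hfirst : lam ⟨0, hb⟩ = 1 + (κ : ℂ))
    (hsub : ∀ j : Fin b, j ≠ ⟨0, hb⟩ → (lam j).re < 1 + κ)
    (m : ℕ) :
    Tendsto
      (fun n : ℕ => ∑ j : Fin b,
        genBinomC (lam j + (n : ℂ) - 1) n * genBinomC (lam j + (b : ℂ) - 1) (b - m)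
          * genBinomC ((m : ℂ) - 1 + (κ : ℂ)) (m - 1)
          / (genBinomC ((n : ℂ) + (κ : ℂ)) n * genBinomC (b : ℂ) (m - 1)
              * ((b : ℂ) - (m : ℂ) + 1) * genBinomC ((b : ℂ) + (κ : ℂ)) b
              * ∑ k ∈ Finset.range b, (lam j + (k : ℂ))⁻¹))
      atTop
      (nhds (genBinomC ((b : ℂ) + (κ : ℂ)) (b - m) * genBinomC ((m : ℂ) - 1 + (κ : ℂ)) (m - 1)
        / (genBinomC (b : ℂ) (m - 1) * ((b : ℂ) - (m : ℂ) + 1)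
            * genBinomC ((b : ℂ) + (κ : ℂ)) b
            * ∑ k ∈ Finset.range b, ((κ : ℂ) + (k : ℂ) + 1)⁻¹))) := by
  set ratio : Fin b → ℕ → ℂ := fun j n => genBinomC (lam j + n - 1) n / genBinomC (n + κ) n
  have hratio_first : Tendsto (ratio ⟨0, hb⟩) atTop (𝓝 1) := by
    refine tendsto_const_nhds.congr fun n => ?_
    simp only [ratio, hfirst, genBinomC_add_natCast_sub_one_div_genBinomC]
    refine (div_self (prod_ne_zero_iff.mpr fun k _ => Complex.ne_zero_of_re_pos ?_)).symm
    simp only [Complex.add_re, Complex.one_re, Complex.ofReal_re, Complex.natCast_re]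
    linarith [(k.cast_nonneg : (0 : ℝ) ≤ k)]
  have hratio : ∀ j ≠ ⟨0, hb⟩, Tendsto (ratio j) atTop (𝓝 0) := fun j hj => by
    simp only [ratio, genBinomC_add_natCast_sub_one_div_genBinomC]
    exact tendsto_prod_range_add_div_prod_range_add (by simpa using hsub j hj)
  convert tendsto_sum_mul_of_tendsto_single _ hratio_first hratio fun j =>
    genBinomC (lam j + b - 1) (b - m) * genBinomC (m - 1 + κ) (m - 1)
      / (genBinomC b (m - 1) * (b - m + 1) * genBinomC (b + κ) b * ∑ k ∈ range b, (lam j + k)⁻¹)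
    using 1
  · funext n
    refine sum_congr rfl fun j _ => ?_
    simp only [ratio, mul_assoc]
    exact mul_div_mul_comm _ _ _ _
  · simp only [hfirst]
    ring_nf

/-- Let `b ≥ 1`, `κ > -1`, and let `λ_1, …, λ_b` be pairwise distinct complex numbers with
`λ_1 = 1+κ`, each satisfying the indicial equation `λ_j(λ_j+1)⋯(λ_j+b-1) = (1+κ)(2+κ)⋯(b+κ)`,
with `Re λ_j < 1+κ` for `j ≥ 2`, and `∑_{k=0}^{b-1} 1/(λ_j+k) ≠ 0`.  For `1 ≤ m ≤ b`, the
quantity `P_n(m)` (the probability mass function of the initial bucket size `K_n`, written here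
with `n` replaced by `n+1` so as to index by `n ∈ ℕ`) converges, as `n → ∞`, to the stated
discrete limit law. -/
theorem initial_bucket_size_limit_law (b : ℕ) (hb : 1 ≤ b) (κ : ℝ) (hκ : -1 < κ)
    (lam : Fin b → ℂ) (hinj : Function.Injective lam)
    (hfirst : lam ⟨0, hb⟩ = 1 + (κ : ℂ))
    (hsub : ∀ j : Fin b, j ≠ ⟨0, hb⟩ → (lam j).re < 1 + κ)
    (hind : ∀ j : Fin b,
      ∏ k ∈ Finset.range b, (lam j + (k : ℂ)) = ∏ k ∈ Finset.range b, (1 + (κ : ℂ) + (k : ℂ)))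
    (hsum : ∀ j : Fin b, ∑ k ∈ Finset.range b, (lam j + (k : ℂ))⁻¹ ≠ 0)
    (m : ℕ) (hm1 : 1 ≤ m) (hmb : m ≤ b) :
    Tendsto
      (fun n : ℕ => ∑ j : Fin b,
        genBinomC (lam j + (n : ℂ) - 1) n * genBinomC (lam j + (b : ℂ) - 1) (b - m)
          * genBinomC ((m : ℂ) - 1 + (κ : ℂ)) (m - 1)
          / (genBinomC ((n : ℂ) + (κ : ℂ)) n * genBinomC (b : ℂ) (m - 1)
              * ((b : ℂ) - (m : ℂ) + 1) * genBinomC ((b : ℂ) + (κ : ℂ)) b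
              * ∑ k ∈ Finset.range b, (lam j + (k : ℂ))⁻¹))
      atTop
      (nhds (genBinomC ((b : ℂ) + (κ : ℂ)) (b - m) * genBinomC ((m : ℂ) - 1 + (κ : ℂ)) (m - 1)
        / (genBinomC (b : ℂ) (m - 1) * ((b : ℂ) - (m : ℂ) + 1)
            * genBinomC ((b : ℂ) + (κ : ℂ)) b
            * ∑ k ∈ Finset.range b, ((κ : ℂ) + (k : ℂ) + 1)⁻¹))) :=
  initial_bucket_size_limit_law_general b hb κ hκ lam hfirst hsub m
end

section
/- Let κ > −1 be a real number and λ a complex number with Re λ < 1+κ. Then the ratio C(λ+n−2, n−1) / C(n−1+κ, n−1) tends to 0 as n → ∞. (This is the key estimate showing that the contributions of the subdominant roots of the indicial equation to the probability mass function of the initial bucket size vanish asymptotically.) -/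
open Filter Topology

/-!
Both binomial coefficients are rising factorials over `n!`: `C(x + n - 1, n) = x⁽ⁿ⁾ / n!`, and
`C(n + κ, n) = (κ+1)⁽ⁿ⁾ / n!`. Euler's sequence `Γₙ(s) = n^s n! / s⁽ⁿ⁺¹⁾ → Γ(s)` gives
`λ⁽ⁿ⁺¹⁾ / (κ+1)⁽ⁿ⁺¹⁾ = n^(λ-κ-1) · Γₙ(κ+1) / Γₙ(λ)`, and `‖n^(λ-κ-1)‖ = n^(Re λ-κ-1) → 0`.
If `λ` is a pole of `Γ`, then `λ⁽ⁿ⁾ = 0` for large `n`.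
-/

lemma ascPochhammer_eval_eq_prod_range {R : Type*} [CommSemiring R] (n : ℕ) (r : R) :
    (ascPochhammer R n).eval r = ∏ j ∈ Finset.range n, (r + j) := by
  induction n with
  | zero => simp
  | succ n ih => simp [ascPochhammer_succ_right, ih, ← Finset.prod_range_succ]

lemma genBinomC_add_sub_one (x : ℂ) (n : ℕ) :
    genBinomC (x + n - 1) n = (ascPochhammer ℂ n).eval x / n.factorial := by
  rw [genBinomC, ← descPochhammer_eval_eq_prod_range, descPochhammer_eval_eq_ascPochhammer]
  ring_nf

namespace Complex

lemma ascPochhammer_succ_div_eq_cpow_mul_GammaSeq_div (a b : ℂ) {n : ℕ} (hn : n ≠ 0) :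
    (ascPochhammer ℂ (n + 1)).eval a / (ascPochhammer ℂ (n + 1)).eval b
      = (n : ℂ) ^ (a - b) * (GammaSeq b n / GammaSeq a n) := by
  have hn' : (n : ℂ) ≠ 0 := Nat.cast_ne_zero.mpr hn
  have hcpow : (n : ℂ) ^ (a - b) * (n : ℂ) ^ b = (n : ℂ) ^ a := by
    rw [← cpow_add _ _ hn', sub_add_cancel]
  have hnb : (n : ℂ) ^ b ≠ 0 := by simp [cpow_eq_zero_iff, hn']
  have hnab : (n : ℂ) ^ (a - b) ≠ 0 := by simp [cpow_eq_zero_iff, hn']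
  have hfact : (n.factorial : ℂ) ≠ 0 := Nat.cast_ne_zero.mpr n.factorial_ne_zero
  simp only [GammaSeq, ascPochhammer_eval_eq_prod_range]
  rw [div_div_div_comm, div_eq_mul_inv _ (_ / _), inv_div, ← mul_assoc, ← hcpow]
  field_simp

lemma tendsto_natCast_cpow_atTop_zero {s : ℂ} (hs : s.re < 0) :
    Tendsto (fun n : ℕ => (n : ℂ) ^ s) atTop (𝓝 0) := by
  rw [tendsto_zero_iff_norm_tendsto_zero]
  simp only [norm_natCast_cpow_of_re_ne_zero _ hs.ne]
  simpa [Function.comp_def] using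
    (tendsto_rpow_neg_atTop (neg_pos.mpr hs)).comp tendsto_natCast_atTop_atTop

lemma tendsto_ascPochhammer_div_of_re_lt {a b : ℂ} (hab : a.re < b.re) :
    Tendsto (fun n => (ascPochhammer ℂ n).eval a / (ascPochhammer ℂ n).eval b) atTop (𝓝 0) := by
  by_cases hpole : ∃ m : ℕ, a = -m
  · obtain ⟨m, rfl⟩ := hpole
    refine tendsto_const_nhds.congr' ?_
    filter_upwards [eventually_gt_atTop m] with n hn
    rw [ascPochhammer_eval_neg_coe_nat_of_lt hn, zero_div]
  push Not at hpole
  rw [← tendsto_add_atTop_iff_nat 1]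
  have hcpow := tendsto_natCast_cpow_atTop_zero (s := a - b) (by simpa using hab)
  have hGamma := (GammaSeq_tendsto_Gamma b).div (GammaSeq_tendsto_Gamma a) (Gamma_ne_zero hpole)
  refine (zero_mul (Gamma b / Gamma a) ▸ hcpow.mul hGamma).congr' ?_
  filter_upwards [eventually_ne_atTop 0] with n hn
  exact (ascPochhammer_succ_div_eq_cpow_mul_GammaSeq_div a b hn).symm

end Complex

theorem subdominant_root_ratio_vanishes_general (κ : ℝ) (lam : ℂ)
    (hlam : lam.re < 1 + κ) :
    Tendsto (fun n : ℕ => genBinomC (lam + (n : ℂ) - 1) n / genBinomC ((n : ℂ) + (κ : ℂ)) n)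
      atTop (nhds 0) := by
  have hre : lam.re < ((κ : ℂ) + 1).re := by simpa [add_comm] using hlam
  refine (Complex.tendsto_ascPochhammer_div_of_re_lt hre).congr fun n => ?_
  have hfact : (n.factorial : ℂ) ≠ 0 := Nat.cast_ne_zero.mpr n.factorial_ne_zero
  rw [genBinomC_add_sub_one, show (n : ℂ) + κ = (κ + 1) + n - 1 by ring, genBinomC_add_sub_one,
    div_div_div_cancel_right₀ hfact]

/-- For real `κ > -1` and complex `λ` with `Re λ < 1+κ`, the ratio
`C(λ+n-2, n-1)/C(n-1+κ, n-1)` tends to `0` as `n → ∞`.  (Written with `n` replaced by `n+1` so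
as to index by `n ∈ ℕ`: `C(λ+n-1, n)/C(n+κ, n) → 0`.) -/
theorem subdominant_root_ratio_vanishes (κ : ℝ) (hκ : -1 < κ) (lam : ℂ)
    (hlam : lam.re < 1 + κ) :
    Tendsto (fun n : ℕ => genBinomC (lam + (n : ℂ) - 1) n / genBinomC ((n : ℂ) + (κ : ℂ)) n)
      atTop (nhds 0) :=
  subdominant_root_ratio_vanishes_general κ lam hlam
end

section
/- Let φ : ℝ → ℝ be continuous with φ(t) > 0 for all t, let ψ > 0, a > 0, and let T : ℝ → ℝ be twice differentiable on [0,a) with T(0) = 0, T'(0) = ψ, and T''(z) = φ(T(z)) for all z ∈ [0,a). Then T' > 0 on [0,a) and for every z ∈ [0,a) it holds that ∫_0^{T(z)} (ψ² + 2·Φ(x))^{−1/2} dx = z, where Φ(x) = ∫_0^x φ(t) dt. (This gives the implicit characterization of the exponential generating function of bilabelled bucket increasing tree families with bucket size b = 2.) -/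
/-!
Differentiating `T' ^ 2 - 2 Φ(T)` gives `2 T' (T'' - φ(T)) = 0`, so `T' ^ 2 = ψ ^ 2 + 2 Φ(T)` on
`[0, a)`. As `T'' = φ(T) > 0`, `T'` increases from `ψ > 0`, so `T' = (ψ ^ 2 + 2 Φ(T)) ^ (1/2)`.
Separating variables, with `G y = ∫_0^y (ψ ^ 2 + 2 Φ) ^ (-1/2)` the function `G(T z) - z` has
derivative `T' / (ψ ^ 2 + 2 Φ(T)) ^ (1/2) - 1 = 0`, hence vanishes as it does at `z = 0`.
-/

open Set

section FirstIntegrals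

variable {D : Set ℝ}

theorem monotoneOn_of_hasDerivWithinAt_nonneg_of_mem (hD : Convex ℝ D) {f f' : ℝ → ℝ}
    (hf : ∀ x ∈ D, HasDerivWithinAt f (f' x) D x) (hf' : ∀ x ∈ D, 0 ≤ f' x) :
    MonotoneOn f D :=
  monotoneOn_of_hasDerivWithinAt_nonneg hD (fun x hx => (hf x hx).continuousWithinAt)
    (fun x hx => (hf x (interior_subset hx)).mono interior_subset)
    (fun x hx => hf' x (interior_subset hx))

theorem eq_of_hasDerivWithinAt_zero (hD : Convex ℝ D) {f : ℝ → ℝ}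
    (hf : ∀ x ∈ D, HasDerivWithinAt f 0 D x) {x y : ℝ} (hx : x ∈ D) (hy : y ∈ D) :
    f x = f y := by
  have hmono : MonotoneOn f D :=
    monotoneOn_of_hasDerivWithinAt_nonneg_of_mem hD hf fun _ _ => le_rfl
  have hanti : MonotoneOn (fun x => -f x) D :=
    monotoneOn_of_hasDerivWithinAt_nonneg_of_mem hD (fun x hx => (hf x hx).neg) fun _ _ =>
      neg_zero.ge
  rcases le_total x y with h | h
  · linarith [hmono hx hy h, hanti hx hy h]
  · linarith [hmono hy hx h, hanti hy hx h]

theorem energy_eq_of_hasDerivWithinAt (hD : Convex ℝ D) {φ Φ T T' : ℝ → ℝ}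
    (hΦ : ∀ x, HasDerivAt Φ (φ x) x) (hT : ∀ z ∈ D, HasDerivWithinAt T (T' z) D z)
    (hT' : ∀ z ∈ D, HasDerivWithinAt T' (φ (T z)) D z) {x y : ℝ} (hx : x ∈ D) (hy : y ∈ D) :
    T' x ^ 2 - 2 * Φ (T x) = T' y ^ 2 - 2 * Φ (T y) := by
  refine eq_of_hasDerivWithinAt_zero (f := fun z => T' z ^ 2 - 2 * Φ (T z)) hD
    (fun z hz => ?_) hx hy
  have h := ((hT' z hz).fun_pow 2).sub
    (((hΦ (T z)).comp_hasDerivWithinAt z (hT z hz)).const_mul 2)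
  exact h.congr_deriv (by push_cast; ring)

theorem comp_sub_id_eq_of_deriv_mul_eq_one (hD : Convex ℝ D) {G g T T' : ℝ → ℝ}
    (hG : ∀ z ∈ D, HasDerivAt G (g (T z)) (T z)) (hT : ∀ z ∈ D, HasDerivWithinAt T (T' z) D z)
    (hgT : ∀ z ∈ D, g (T z) * T' z = 1) {x y : ℝ} (hx : x ∈ D) (hy : y ∈ D) :
    G (T x) - x = G (T y) - y := by
  refine eq_of_hasDerivWithinAt_zero (f := fun z => G (T z) - z) hD (fun z hz => ?_) hx hy
  have h := ((hG z hz).comp_hasDerivWithinAt z (hT z hz)).sub (hasDerivWithinAt_id z D)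
  exact h.congr_deriv (by rw [hgT z hz, sub_self])

end FirstIntegrals

theorem hasDerivAt_integral_of_continuousOn {E : Type*} [NormedAddCommGroup E]
    [NormedSpace ℝ E] [CompleteSpace E] {g : ℝ → E} {U : Set ℝ} (hU : IsOpen U)
    (hg : ContinuousOn g U) {b y : ℝ} (hbyU : uIcc b y ⊆ U) :
    HasDerivAt (fun x => ∫ t in b..x, g t) (g y) y :=
  have hy : y ∈ U := hbyU right_mem_uIcc
  intervalIntegral.integral_hasDerivAt_right (hg.mono hbyU).intervalIntegrable
    (hg.stronglyMeasurableAtFilter hU y hy) (hg.continuousAt (hU.mem_nhds hy))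

theorem hasDerivAt_integral_rpow_of_pos {h : ℝ → ℝ} (hh : Continuous h) {b y r : ℝ}
    (hpos : ∀ x ∈ uIcc b y, 0 < h x) :
    HasDerivAt (fun u => ∫ x in b..u, h x ^ r) (h y ^ r) y :=
  hasDerivAt_integral_of_continuousOn (isOpen_lt continuous_const hh)
    (fun _ hx => (hh.continuousAt.rpow_const (Or.inl (ne_of_gt hx))).continuousWithinAt) hpos

theorem Real.sq_rpow_neg_half {x : ℝ} (hx : 0 ≤ x) : (x ^ 2) ^ (-(1 / 2) : ℝ) = x⁻¹ := by
  rw [Real.rpow_neg (sq_nonneg x), ← Real.sqrt_eq_rpow, Real.sqrt_sq hx]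

theorem implicit_characterization_b2_general (φ : ℝ → ℝ) (hφ : Continuous φ) (hφpos : ∀ t, 0 < φ t)
    (ψ a : ℝ) (hψ : 0 < ψ)
    (T T' : ℝ → ℝ) (hT0 : T 0 = 0) (hT'0 : T' 0 = ψ)
    (hd1 : ∀ z ∈ Set.Ico 0 a, HasDerivWithinAt T (T' z) (Set.Ico 0 a) z)
    (hd2 : ∀ z ∈ Set.Ico 0 a, HasDerivWithinAt T' (φ (T z)) (Set.Ico 0 a) z) :
    ∀ z ∈ Set.Ico 0 a, 0 < T' z ∧
      (∫ x in (0 : ℝ)..(T z), (ψ ^ 2 + 2 * ∫ t in (0 : ℝ)..x, φ t) ^ (-(1 / 2) : ℝ)) = z := by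
  set Φ : ℝ → ℝ := fun x => ∫ t in (0 : ℝ)..x, φ t
  have hΦ : ∀ x, HasDerivAt Φ (φ x) x := fun x => (hφ.integral_hasStrictDerivAt 0 x).hasDerivAt
  have hbase : ∀ x, 0 ≤ x → 0 < ψ ^ 2 + 2 * Φ x := fun x hx =>
    add_pos_of_pos_of_nonneg (pow_pos hψ 2)
      (mul_nonneg zero_le_two (intervalIntegral.integral_nonneg hx fun t _ => (hφpos t).le))
  intro z hz
  have h0 : (0 : ℝ) ∈ Ico 0 a := ⟨le_rfl, hz.1.trans_lt hz.2⟩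
  have hT'pos : ∀ x ∈ Ico 0 a, 0 < T' x := fun x hx => hψ.trans_le <| hT'0 ▸
    monotoneOn_of_hasDerivWithinAt_nonneg_of_mem (convex_Ico 0 a) hd2 (fun y _ => (hφpos _).le)
      h0 hx hx.1
  have hTnonneg : ∀ x ∈ Ico 0 a, 0 ≤ T x := fun x hx => hT0 ▸
    monotoneOn_of_hasDerivWithinAt_nonneg_of_mem (convex_Ico 0 a) hd1 (fun y hy => (hT'pos y hy).le)
      h0 hx hx.1
  have henergy : ∀ x ∈ Ico 0 a, T' x ^ 2 = ψ ^ 2 + 2 * Φ (T x) := fun x hx => by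
    have := energy_eq_of_hasDerivWithinAt (convex_Ico 0 a) hΦ hd1 hd2 hx h0
    rw [hT0, hT'0, show Φ 0 = 0 from intervalIntegral.integral_same] at this
    linarith
  have hsep := comp_sub_id_eq_of_deriv_mul_eq_one (convex_Ico 0 a)
    (g := fun x => (ψ ^ 2 + 2 * Φ x) ^ (-(1 / 2) : ℝ))
    (fun x hx => hasDerivAt_integral_rpow_of_pos (h := fun x => ψ ^ 2 + 2 * Φ x)
      (continuous_const.add (continuous_const.mul (continuous_iff_continuousAt.2 fun y =>
        (hΦ y).continuousAt)))
      fun y hy => hbase y (uIcc_of_le (hTnonneg x hx) ▸ hy).1)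
    hd1 (fun x hx => by
      rw [← henergy x hx, Real.sq_rpow_neg_half (hT'pos x hx).le,
        inv_mul_cancel₀ (hT'pos x hx).ne'])
    hz h0
  rw [hT0, intervalIntegral.integral_same] at hsep
  exact ⟨hT'pos z hz, by linarith⟩

/-- Let `φ : ℝ → ℝ` be continuous and everywhere positive, `ψ > 0`, `a > 0`, and let `T` be twice
differentiable on `[0,a)` (with first derivative `T'`) satisfying `T(0) = 0`, `T'(0) = ψ` and
`T''(z) = φ(T(z))` on `[0,a)`.  Then `T' > 0` on `[0,a)` and
`∫_0^{T(z)} (ψ² + 2·Φ(x))^{-1/2} dx = z` for all `z ∈ [0,a)`, where `Φ(x) = ∫_0^x φ(t) dt`. -/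
theorem implicit_characterization_b2 (φ : ℝ → ℝ) (hφ : Continuous φ) (hφpos : ∀ t, 0 < φ t)
    (ψ a : ℝ) (hψ : 0 < ψ) (ha : 0 < a)
    (T T' : ℝ → ℝ) (hT0 : T 0 = 0) (hT'0 : T' 0 = ψ)
    (hd1 : ∀ z ∈ Set.Ico 0 a, HasDerivWithinAt T (T' z) (Set.Ico 0 a) z)
    (hd2 : ∀ z ∈ Set.Ico 0 a, HasDerivWithinAt T' (φ (T z)) (Set.Ico 0 a) z) :
    ∀ z ∈ Set.Ico 0 a, 0 < T' z ∧
      (∫ x in (0 : ℝ)..(T z), (ψ ^ 2 + 2 * ∫ t in (0 : ℝ)..x, φ t) ^ (-(1 / 2) : ℝ)) = z :=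
  implicit_characterization_b2_general φ hφ hφpos ψ a hψ T T' hT0 hT'0 hd1 hd2
end

section
/- Let b ≥ 2 be an integer and let M be the b×b real matrix whose entries (indexing rows and columns by 1,…,b) are M[i][i] = −i and M[i][i+1] = i+1 for 1 ≤ i ≤ b−1, M[b][1] = 1, and all other entries 0. Then for every real (or complex) λ, det(M − λ·I) = (−1)^b·(λ(λ+1)⋯(λ+b−1) − b!). (M is the ball replacement matrix of the Pólya urn associated with the node-type composition of bucket recursive trees.) -/
lemma prod_range_add_two_eq_factorial (n : ℕ) :
    ∏ i ∈ Finset.range (n + 1), (i + 2) = (n + 2).factorial := by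
  induction n with
  | zero => simp [Nat.factorial]
  | succ m ih =>
    rw [Finset.prod_range_succ, ih, show m + 1 + 2 = (m + 2) + 1 from rfl,
      Nat.factorial_succ (m + 2)]
    exact Nat.mul_comm _ _

/-- Let `b ≥ 2` and let `M` be the `b×b` real matrix (rows/columns indexed `0, …, b-1`,
corresponding to `1, …, b`) with `M[i][i] = -(i+1)` and `M[i][i+1] = i+2` for `0 ≤ i ≤ b-2`,
`M[b-1][0] = 1`, and all other entries `0` — the ball replacement matrix of the Pólya urn for
bucket recursive trees.  Then for every real `λ`,
`det(M - λ·I) = (-1)^b · (λ(λ+1)⋯(λ+b-1) - b!)`. -/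
theorem bucket_recursive_urn_char_poly (b : ℕ) (hb : 2 ≤ b) (lam : ℝ) :
    Matrix.det
      ((Matrix.of fun i j : Fin b =>
          if i.val = b - 1 then (if j.val = 0 then (1 : ℝ) else 0)
          else if j = i then -((i.val : ℝ) + 1)
          else if j.val = i.val + 1 then (i.val : ℝ) + 2
          else 0)
        - lam • (1 : Matrix (Fin b) (Fin b) ℝ))
      = (-1) ^ b * (∏ k ∈ Finset.range b, (lam + k) - (b.factorial : ℝ)) := by
  obtain ⟨n, rfl⟩ : ∃ n, b = n + 2 := ⟨b - 2, by omega⟩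
  set A : Matrix (Fin (n + 2)) (Fin (n + 2)) ℝ :=
    (Matrix.of fun i j : Fin (n + 2) =>
        if i.val = n + 2 - 1 then (if j.val = 0 then (1 : ℝ) else 0)
        else if j = i then -((i.val : ℝ) + 1)
        else if j.val = i.val + 1 then (i.val : ℝ) + 2
        else 0)
      - lam • (1 : Matrix (Fin (n + 2)) (Fin (n + 2)) ℝ) with hA
  have hAe : ∀ i j : Fin (n + 2), A i j =
      (if i.val = n + 1 then (if j.val = 0 then (1 : ℝ) else 0)
       else if j = i then -((i.val : ℝ) + 1)
       else if j.val = i.val + 1 then (i.val : ℝ) + 2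
       else 0) - (if i = j then lam else 0) := by
    intro i j
    simp only [hA, Matrix.sub_apply, Matrix.smul_apply, Matrix.one_apply, Matrix.of_apply,
      smul_eq_mul, mul_ite, mul_one, mul_zero]
    norm_num
  -- Laplace expansion along column 0
  rw [Matrix.det_succ_column_zero (n := n + 1) A]
  rw [Finset.sum_eq_add_of_mem (0 : Fin (n + 2)) (Fin.last (n + 1))
      (Finset.mem_univ _) (Finset.mem_univ _)
      (by simp [Fin.ext_iff])
      ?_]
  · -- compute the two surviving terms
    -- entries in column 0
    have hA00 : A 0 0 = -(lam + 1) := by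
      rw [hAe]
      simp only [Fin.ext_iff, Fin.val_zero]
      split_ifs <;> first | (push_cast; ring1) | (exfalso; first | assumption | omega)
    have hAl0 : A (Fin.last (n + 1)) 0 = 1 := by
      rw [hAe]
      simp only [Fin.ext_iff, Fin.val_zero, Fin.val_last]
      split_ifs <;> first | ring1 | (exfalso; first | assumption | omega)
    -- the two minors
    have hB1 : (A.submatrix (Fin.succAbove 0) Fin.succ).det
        = (∏ i : Fin n, -(lam + ((i : ℕ) : ℝ) + 2)) * (-lam) := by
      have htri : (A.submatrix (Fin.succAbove 0) Fin.succ).BlockTriangular id := by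
        intro i j hij
        have hji : (j : ℕ) < (i : ℕ) := hij
        simp only [Matrix.submatrix_apply, Fin.succAbove_zero]
        rw [hAe]
        simp only [Fin.ext_iff, Fin.val_succ, Fin.val_zero]
        split_ifs <;> first | ring1 | (exfalso; first | assumption | omega)
      rw [Matrix.det_of_upperTriangular htri]
      rw [Fin.prod_univ_castSucc]
      congr 1
      · refine Finset.prod_congr rfl fun i _ => ?_
        have hi : (i : ℕ) < n := i.isLt
        simp only [Matrix.submatrix_apply, Fin.succAbove_zero]
        rw [hAe]
        simp only [Fin.ext_iff, Fin.val_succ, Fin.coe_castSucc, Fin.val_zero]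
        split_ifs <;> first | (push_cast; ring1) | (exfalso; first | assumption | omega)
      · simp only [Matrix.submatrix_apply, Fin.succAbove_zero]
        rw [hAe]
        simp only [Fin.ext_iff, Fin.val_succ, Fin.val_last, Fin.val_zero]
        split_ifs <;> first | ring1 | (exfalso; first | assumption | omega)
    have hB2 : (A.submatrix (Fin.succAbove (Fin.last (n + 1))) Fin.succ).det
        = ((n + 2).factorial : ℝ) := by
      have htri : (A.submatrix (Fin.succAbove (Fin.last (n + 1))) Fin.succ).BlockTriangular
          OrderDual.toDual := by
        intro i j hij
        have hij' : (i : ℕ) < (j : ℕ) := hij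
        simp only [Matrix.submatrix_apply, Fin.succAbove_last]
        rw [hAe]
        simp only [Fin.ext_iff, Fin.val_succ, Fin.coe_castSucc, Fin.val_zero]
        split_ifs <;> first | ring1 | (exfalso; first | assumption | omega)
      rw [Matrix.det_of_lowerTriangular _ htri]
      have hdiag : ∀ i : Fin (n + 1),
          (A.submatrix (Fin.succAbove (Fin.last (n + 1))) Fin.succ) i i
            = ((i : ℕ) : ℝ) + 2 := by
        intro i
        have hi : (i : ℕ) < n + 1 := i.isLt
        simp only [Matrix.submatrix_apply, Fin.succAbove_last]
        rw [hAe]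
        simp only [Fin.ext_iff, Fin.val_succ, Fin.coe_castSucc, Fin.val_zero]
        split_ifs <;> first | (push_cast; ring1) | (exfalso; first | assumption | omega)
      simp only [hdiag]
      rw [Fin.prod_univ_eq_prod_range (fun i => ((i : ℕ) : ℝ) + 2)]
      have : ∏ i ∈ Finset.range (n + 1), ((i : ℝ) + 2) = (((n + 2).factorial : ℕ) : ℝ) := by
        rw [← prod_range_add_two_eq_factorial n]
        push_cast
        rfl
      rw [this]
    rw [hA00, hAl0, hB1, hB2]
    -- pure algebra now
    have hsign : ((-1 : ℝ)) ^ ((Fin.last (n + 1) : Fin (n+2)) : ℕ) = (-1 : ℝ) ^ (n + 1) := by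
      simp [Fin.last]
    rw [hsign]
    have hprodneg : (∏ i : Fin n, -(lam + ((i : ℕ) : ℝ) + 2))
        = (-1 : ℝ) ^ n * ∏ i : Fin n, (lam + ((i : ℕ) : ℝ) + 2) := by
      have h : ∀ i : Fin n, -(lam + ((i : ℕ) : ℝ) + 2)
          = (-1 : ℝ) * (lam + ((i : ℕ) : ℝ) + 2) := fun i => by ring
      rw [Finset.prod_congr rfl (fun i _ => h i), Finset.prod_mul_distrib,
        Finset.prod_const]
      simp
    have hsplit : ∏ k ∈ Finset.range (n + 2), (lam + (k : ℝ))
        = ((∏ i : Fin n, (lam + ((i : ℕ) : ℝ) + 2)) * (lam + 1)) * (lam + 0) := by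
      rw [Finset.prod_range_succ', Finset.prod_range_succ',
        Fin.prod_univ_eq_prod_range (fun i => lam + (i : ℝ) + 2)]
      congr 1
      · congr 1
        · refine Finset.prod_congr rfl fun k _ => ?_
          push_cast
          ring
        · norm_num
      · norm_num
    rw [hprodneg, hsplit]
    simp only [Fin.val_zero, pow_zero, one_mul, mul_one]
    rw [show n + 2 = n + 1 + 1 from rfl, pow_succ, pow_succ]
    ring
  · -- all other terms vanish
    intro c _ hc
    have h0 : A c 0 = 0 := by
      have hc0 : (c : ℕ) ≠ 0 := fun h => hc.1 (Fin.ext h)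
      have hcl : (c : ℕ) ≠ n + 1 := fun h => hc.2 (Fin.ext (by simpa using h))
      rw [hAe]
      simp only [Fin.ext_iff, Fin.val_zero]
      split_ifs <;> first | ring1 | (exfalso; first | assumption | omega)
    rw [h0]
    ring
end

section
/- Let b ≥ 2 be an integer, α a real number, and let M be the b×b real matrix whose entries (indexing rows and columns by 1,…,b) are M[i][i] = −(iα+i−1) and M[i][i+1] = (i+1)α+i for 1 ≤ i ≤ b−1, M[b][1] = α, M[b][b] = 1, and all other entries 0. Then for every real (or complex) λ, det(M − λ·I) = (−1)^b·(∏_{i=0}^{b−1}(λ−1+i(α+1)) − ∏_{i=0}^{b−1}(α+i(α+1))), which for α ≠ −1 equals (−1)^b(α+1)^b·(((λ−1)/(α+1))^{rising b} − (α/(α+1))^{rising b}). (M is the ball replacement matrix of the Pólya urn associated with the node-type composition of (b,α)-plane oriented recursive trees.) -/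
open Matrix Finset


/-- Let `b ≥ 2`, `α` real, and let `M` be the `b×b` real matrix (rows/columns indexed `0, …, b-1`,
corresponding to `1, …, b`) with `M[i][i] = -((i+1)α+i)` and `M[i][i+1] = (i+2)α+(i+1)` for
`0 ≤ i ≤ b-2`, `M[b-1][0] = α`, `M[b-1][b-1] = 1`, and all other entries `0` — the ball
replacement matrix of the Pólya urn for `(b,α)`-plane oriented recursive trees.  Then for every
real `λ`, `det(M - λ·I) = (-1)^b·(∏_{i=0}^{b-1}(λ-1+i(α+1)) - ∏_{i=0}^{b-1}(α+i(α+1)))`,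
which for `α ≠ -1` equals
`(-1)^b(α+1)^b·(((λ-1)/(α+1))^{rising b} - (α/(α+1))^{rising b})`. -/
theorem bport_urn_char_poly (b : ℕ) (hb : 2 ≤ b) (α : ℝ) (lam : ℝ) :
    (Matrix.det
      ((Matrix.of fun i j : Fin b =>
          if i.val = b - 1 then
            (if j.val = 0 then α else if j = i then (1 : ℝ) else 0)
          else if j = i then -(((i.val : ℝ) + 1) * α + (i.val : ℝ))
          else if j.val = i.val + 1 then ((i.val : ℝ) + 2) * α + ((i.val : ℝ) + 1)
          else 0)
        - lam • (1 : Matrix (Fin b) (Fin b) ℝ))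
      = (-1) ^ b * (∏ i ∈ Finset.range b, (lam - 1 + (i : ℝ) * (α + 1))
          - ∏ i ∈ Finset.range b, (α + (i : ℝ) * (α + 1)))) ∧
    (α ≠ -1 →
      (-1 : ℝ) ^ b * (∏ i ∈ Finset.range b, (lam - 1 + (i : ℝ) * (α + 1))
          - ∏ i ∈ Finset.range b, (α + (i : ℝ) * (α + 1)))
        = (-1) ^ b * (α + 1) ^ b * (∏ i ∈ Finset.range b, ((lam - 1) / (α + 1) + (i : ℝ))
            - ∏ i ∈ Finset.range b, (α / (α + 1) + (i : ℝ)))) := by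
  constructor
  · obtain ⟨n, rfl⟩ : ∃ n, b = n + 2 := ⟨b - 2, by omega⟩
    set A : Matrix (Fin (n + 2)) (Fin (n + 2)) ℝ :=
      (Matrix.of fun i j : Fin (n + 2) =>
          if i.val = n + 2 - 1 then
            (if j.val = 0 then α else if j = i then (1 : ℝ) else 0)
          else if j = i then -(((i.val : ℝ) + 1) * α + (i.val : ℝ))
          else if j.val = i.val + 1 then ((i.val : ℝ) + 2) * α + ((i.val : ℝ) + 1)
          else 0)
        - lam • (1 : Matrix (Fin (n + 2)) (Fin (n + 2)) ℝ) with hA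
    have hAe : ∀ i j : Fin (n + 2), A i j =
        (if i.val = n + 1 then
            (if j.val = 0 then α else if j = i then (1 : ℝ) else 0)
          else if j = i then -(((i.val : ℝ) + 1) * α + (i.val : ℝ))
          else if j.val = i.val + 1 then ((i.val : ℝ) + 2) * α + ((i.val : ℝ) + 1)
          else 0) - lam * (if i = j then 1 else 0) := by
      intro i j
      simp [hA, Matrix.sub_apply, Matrix.smul_apply, Matrix.one_apply]
    rw [Matrix.det_succ_row A (Fin.last (n + 1))]
    rw [Fin.sum_univ_succ, Fin.sum_univ_castSucc]
    have hmid : ∀ j : Fin n,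
        ((-1 : ℝ) ^ ((Fin.last (n+1) : ℕ) + ((j.castSucc.succ : Fin (n+2)) : ℕ)) *
          A (Fin.last (n+1)) j.castSucc.succ *
          det (A.submatrix (Fin.last (n+1)).succAbove (j.castSucc.succ).succAbove)) = 0 := by
      intro j
      have : A (Fin.last (n+1)) j.castSucc.succ = 0 := by
        rw [hAe]
        have h1 : (j.castSucc.succ : Fin (n+2)).val = j.val + 1 := by simp
        have h2 : j.val + 1 ≠ 0 := by omega
        have h3 : (j.castSucc.succ : Fin (n+2)) ≠ Fin.last (n+1) := by
          simp [Fin.ext_iff, h1]; omega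
        have h4 : Fin.last (n+1) ≠ (j.castSucc.succ : Fin (n+2)) := h3.symm
        simp [h1, h2, h3, h4, Fin.val_last]
      rw [this]; ring
    rw [Finset.sum_congr rfl (fun j _ => hmid j), Finset.sum_const_zero]
    -- the two remaining terms
    have hd1 : det (A.submatrix (Fin.last (n+1)).succAbove (0 : Fin (n+2)).succAbove)
        = ∏ i : Fin (n + 1), (((i.val : ℝ) + 2) * α + ((i.val : ℝ) + 1)) := by
      rw [Matrix.det_of_lowerTriangular]
      · apply Finset.prod_congr rfl
        intro i _
        simp only [Matrix.submatrix_apply, Fin.succAbove_last, Fin.succAbove_zero]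
        rw [hAe]
        have h1 : (i.castSucc : Fin (n+2)).val = i.val := rfl
        have h2 : (i.succ : Fin (n+2)).val = i.val + 1 := rfl
        have h3 : i.val ≠ n + 1 := by omega
        have h4 : (i.succ : Fin (n+2)) ≠ i.castSucc := by
          simp [Fin.ext_iff]
        have h5 : (i.castSucc : Fin (n+2)) ≠ i.succ := h4.symm
        simp [h1, h2, h3, h4, h5]
      · intro i j hij
        simp only [Function.comp, Matrix.submatrix_apply, Fin.succAbove_last, Fin.succAbove_zero]
        rw [hAe]
        have hij' : (i : ℕ) < (j : ℕ) := hij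
        have h3 : (i.val : ℕ) ≠ n + 1 := by omega
        have h4 : (j.succ : Fin (n+2)) ≠ i.castSucc := by
          simp [Fin.ext_iff]; omega
        have h5 : (i.castSucc : Fin (n+2)) ≠ j.succ := h4.symm
        have h6 : (j.succ : Fin (n+2)).val ≠ (i.castSucc : Fin (n+2)).val + 1 := by
          simp; omega
        simp [h3, h4, h5, h6]
        exact fun h => absurd h (by omega)
    have hd2 : det (A.submatrix (Fin.last (n+1)).succAbove (Fin.last (n+1)).succAbove)
        = ∏ i : Fin (n + 1), (-(lam + ((i.val : ℝ) + 1) * α + (i.val : ℝ))) := by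
      rw [Matrix.det_of_upperTriangular]
      · apply Finset.prod_congr rfl
        intro i _
        simp only [Matrix.submatrix_apply, Fin.succAbove_last]
        rw [hAe]
        have h3 : i.val ≠ n + 1 := by omega
        simp [h3]
        ring
      · intro i j hij
        simp only [Function.comp, Matrix.submatrix_apply, Fin.succAbove_last]
        rw [hAe]
        have hij' : (j : ℕ) < (i : ℕ) := hij
        have h3 : (i.val : ℕ) ≠ n + 1 := by omega
        have h4 : (j.castSucc : Fin (n+2)) ≠ i.castSucc := by
          simp [Fin.ext_iff]; omega
        have h5 : (i.castSucc : Fin (n+2)) ≠ j.castSucc := h4.symm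
        have h6 : (j.castSucc : Fin (n+2)).val ≠ (i.castSucc : Fin (n+2)).val + 1 := by
          simp; omega
        simp [h3, h4, h5, h6]
        exact fun h => absurd h (by omega)
    have hA0 : A (Fin.last (n+1)) 0 = α := by
      rw [hAe]
      have : Fin.last (n+1) ≠ (0 : Fin (n+2)) := by simp [Fin.ext_iff]
      simp [this, Fin.val_last]
    have hAl : A (Fin.last (n+1)) (Fin.last (n+1)) = 1 - lam := by
      rw [hAe]; simp [Fin.val_last]
    simp only [Fin.succ_last, zero_add]
    rw [hd1, hd2, hA0, hAl]
    -- convert products over Fin to range and peel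
    have e1 : ∏ i : Fin (n+1), (((i.val : ℝ) + 2) * α + ((i.val : ℝ) + 1))
        = ∏ i ∈ Finset.range (n+1), (α + ((i : ℝ) + 1) * (α + 1)) := by
      rw [← Fin.prod_univ_eq_prod_range (fun i => (α + ((i : ℝ) + 1) * (α + 1))) (n+1)]
      exact Finset.prod_congr rfl (fun i _ => by push_cast; ring)
    have e2 : ∏ i : Fin (n+1), (-(lam + ((i.val : ℝ) + 1) * α + (i.val : ℝ)))
        = (-1 : ℝ) ^ (n+1) * ∏ i ∈ Finset.range (n+1), (lam - 1 + ((i : ℝ) + 1) * (α + 1)) := by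
      have h : ∏ i : Fin (n+1), (-(lam + ((i.val : ℝ) + 1) * α + (i.val : ℝ)))
          = ∏ i ∈ Finset.range (n+1), ((-1 : ℝ) * (lam - 1 + ((i : ℝ) + 1) * (α + 1))) := by
        rw [← Fin.prod_univ_eq_prod_range
          (fun i => ((-1 : ℝ) * (lam - 1 + ((i : ℝ) + 1) * (α + 1)))) (n+1)]
        exact Finset.prod_congr rfl fun i _ => by push_cast; ring
      rw [h, Finset.prod_mul_distrib, Finset.prod_const, Finset.card_range]
    rw [e1, e2]
    have p1 : ∏ i ∈ Finset.range (n+2), (lam - 1 + (i : ℝ) * (α + 1))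
        = (lam - 1) * ∏ i ∈ Finset.range (n+1), (lam - 1 + ((i : ℝ) + 1) * (α + 1)) := by
      rw [Finset.prod_range_succ', Finset.prod_congr rfl
        (fun i (_ : i ∈ Finset.range (n+1)) =>
          show (lam - 1 + ((i + 1 : ℕ) : ℝ) * (α + 1)) = lam - 1 + ((i : ℝ) + 1) * (α + 1) by
            push_cast; ring)]
      push_cast
      ring
    have p2 : ∏ i ∈ Finset.range (n+2), (α + (i : ℝ) * (α + 1))
        = α * ∏ i ∈ Finset.range (n+1), (α + ((i : ℝ) + 1) * (α + 1)) := by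
      rw [Finset.prod_range_succ', Finset.prod_congr rfl
        (fun i (_ : i ∈ Finset.range (n+1)) =>
          show (α + ((i + 1 : ℕ) : ℝ) * (α + 1)) = α + ((i : ℝ) + 1) * (α + 1) by
            push_cast; ring)]
      push_cast
      ring
    rw [p1, p2]
    have hl : ((Fin.last (n+1) : Fin (n+2)) : ℕ) = n + 1 := rfl
    have h0 : (((0 : Fin (n+2))) : ℕ) = 0 := rfl
    rw [hl, h0]
    have q1 : ((-1 : ℝ)) ^ (n + 1 + (n + 1)) = 1 := by
      rw [show n + 1 + (n + 1) = 2 * (n + 1) by ring, pow_mul]; norm_num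
    have q2 : ((-1 : ℝ)) ^ (n + 2) = (-1) ^ (n + 1) * (-1) := by rw [pow_succ]
    rw [add_zero, q1, q2]
    ring
  · intro hα
    have h1 : α + 1 ≠ 0 := fun h => hα (by linarith)
    have e : ∀ c : ℝ, (α + 1) ^ b * ∏ i ∈ Finset.range b, (c / (α + 1) + (i : ℝ))
        = ∏ i ∈ Finset.range b, (c + (i : ℝ) * (α + 1)) := by
      intro c
      calc (α + 1) ^ b * ∏ i ∈ Finset.range b, (c / (α + 1) + (i : ℝ))
          = ∏ i ∈ Finset.range b, ((α + 1) * (c / (α + 1) + (i : ℝ))) := by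
            rw [Finset.prod_mul_distrib, Finset.prod_const, Finset.card_range]
        _ = ∏ i ∈ Finset.range b, (c + (i : ℝ) * (α + 1)) :=
            Finset.prod_congr rfl fun i _ => by field_simp
    rw [mul_assoc ((-1:ℝ)^b), mul_sub ((α+1)^b), e (lam - 1), e α]
end

section
/- Let b ≥ 2 and d be integers (d ≥ 2), and let M be the b×b real matrix whose entries (indexing rows and columns by 1,…,b) are M[i][i] = −(id−(i−1)) and M[i][i+1] = (i+1)d−i for 1 ≤ i ≤ b−1, M[b][1] = d, M[b][b] = −1, and all other entries 0. Then for every real (or complex) λ, det(M − λ·I) = (−1)^b·(∏_{i=0}^{b−1}(λ+1+i(d−1)) − ∏_{i=0}^{b−1}(d+i(d−1))), which for d ≠ 1 equals (−1)^b(d−1)^b·(((λ+1)/(d−1))^{rising b} − (d/(d−1))^{rising b}). (M is the ball replacement matrix of the Pólya urn associated with the node-type composition of (b,d)-ary increasing trees.) -/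
open Finset Matrix

private lemma aux_det (n d : ℕ) (lam : ℝ) :
    Matrix.det
      ((Matrix.of fun i j : Fin (n+2) =>
          if i.val = (n+2) - 1 then
            (if j.val = 0 then (d : ℝ) else if j = i then (-1 : ℝ) else 0)
          else if j = i then -(((i.val : ℝ) + 1) * (d : ℝ) - (i.val : ℝ))
          else if j.val = i.val + 1 then ((i.val : ℝ) + 2) * (d : ℝ) - ((i.val : ℝ) + 1)
          else 0)
        - lam • (1 : Matrix (Fin (n+2)) (Fin (n+2)) ℝ))
      = (-1) ^ (n+2) * (∏ i ∈ Finset.range (n+2), (lam + 1 + (i : ℝ) * ((d : ℝ) - 1))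
          - ∏ i ∈ Finset.range (n+2), ((d : ℝ) + (i : ℝ) * ((d : ℝ) - 1))) := by
  set A : Matrix (Fin (n+2)) (Fin (n+2)) ℝ :=
    (Matrix.of fun i j : Fin (n+2) =>
          if i.val = (n+2) - 1 then
            (if j.val = 0 then (d : ℝ) else if j = i then (-1 : ℝ) else 0)
          else if j = i then -(((i.val : ℝ) + 1) * (d : ℝ) - (i.val : ℝ))
          else if j.val = i.val + 1 then ((i.val : ℝ) + 2) * (d : ℝ) - ((i.val : ℝ) + 1)
          else 0)
        - lam • (1 : Matrix (Fin (n+2)) (Fin (n+2)) ℝ) with hAdef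
  have hA : ∀ i j : Fin (n+2), A i j =
      (if (i : ℕ) = n + 1 then
          (if (j : ℕ) = 0 then (d : ℝ) else if j = i then (-1 : ℝ) else 0)
        else if j = i then -(((i : ℕ) : ℝ) + 1) * (d : ℝ) + ((i : ℕ) : ℝ)
        else if (j : ℕ) = (i : ℕ) + 1 then ((i : ℕ) : ℝ) * (d : ℝ) + 2 * d - ((i : ℕ) : ℝ) - 1
        else 0) - lam * (if i = j then 1 else 0) := by
    intro i j
    have h21 : n + 2 - 1 = n + 1 := by omega
    simp only [hAdef, Matrix.sub_apply, Matrix.smul_apply, Matrix.one_apply, smul_eq_mul,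
      Matrix.of_apply, h21]
    split_ifs <;> ring
  rw [Matrix.det_succ_column_zero A]
  have hpair : (0 : Fin (n+2)) ≠ Fin.last (n+1) := by
    simp [Fin.ext_iff]
  have hz : ∀ x ∈ (Finset.univ : Finset (Fin (n+2))),
      x ∉ ({0, Fin.last (n+1)} : Finset (Fin (n+2))) →
      (-1 : ℝ) ^ (x : ℕ) * A x 0 * Matrix.det (A.submatrix x.succAbove Fin.succ) = 0 := by
    intro x _ hx
    simp only [Finset.mem_insert, Finset.mem_singleton, not_or] at hx
    have hx0 : (x : ℕ) ≠ 0 := fun h => hx.1 (Fin.ext h)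
    have hxl : (x : ℕ) ≠ n + 1 := fun h => hx.2 (Fin.ext h)
    have h0 : A x 0 = 0 := by
      rw [hA]
      simp only [Fin.ext_iff, Fin.val_zero]
      split_ifs <;> first | ring1 | (exfalso; (first | assumption | omega))
    rw [h0]; ring
  rw [← Finset.sum_subset (Finset.subset_univ ({0, Fin.last (n+1)} : Finset (Fin (n+2)))) hz,
    Finset.sum_pair hpair]
  -- the two minors are triangular
  have hB : Matrix.det (A.submatrix (Fin.succAbove 0) Fin.succ)
      = ∏ i : Fin (n+1), A i.succ i.succ := by
    rw [Matrix.det_of_upperTriangular]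
    · refine Finset.prod_congr rfl fun i _ => ?_
      simp [Fin.succAbove_zero]
    · intro i j hij
      have hv : (j : ℕ) < (i : ℕ) := hij
      simp only [Matrix.submatrix_apply, Fin.succAbove_zero]
      rw [hA]
      simp only [Fin.ext_iff, Fin.val_succ]
      split_ifs <;> first | ring1 | (exfalso; (first | assumption | omega))
  have hC : Matrix.det (A.submatrix (Fin.last (n+1)).succAbove Fin.succ)
      = ∏ i : Fin (n+1), A i.castSucc i.succ := by
    rw [Matrix.det_of_lowerTriangular]
    · refine Finset.prod_congr rfl fun i _ => ?_
      simp [Fin.succAbove_last]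
    · intro i j hij
      have hv : (i : ℕ) < (j : ℕ) := hij
      have hjv : (j : ℕ) < n + 1 := j.isLt
      simp only [Matrix.submatrix_apply, Fin.succAbove_last]
      rw [hA]
      simp only [Fin.ext_iff, Fin.val_succ, Fin.coe_castSucc]
      split_ifs <;> first | ring1 | (exfalso; (first | assumption | omega))
  -- entries
  have hA00 : A 0 0 = -(lam + 1 + 1 * ((d : ℝ) - 1)) := by
    rw [hA]
    simp only [Fin.ext_iff, Fin.val_zero]
    split_ifs <;> first | (exfalso; (first | assumption | omega)) | (push_cast; ring1)
  have hAl0 : A (Fin.last (n+1)) 0 = (d : ℝ) := by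
    rw [hA]
    simp only [Fin.ext_iff, Fin.val_zero, Fin.val_last]
    split_ifs <;> first | (exfalso; (first | assumption | omega)) | (push_cast; ring1)
  have hdiag : ∀ i : Fin (n+1), A i.succ i.succ =
      (fun k : ℕ => if k = n then -(lam + 1 + 0 * ((d : ℝ) - 1))
        else -(lam + 1 + ((k : ℝ) + 2) * ((d : ℝ) - 1))) (i : ℕ) := by
    intro i
    have hiv : (i : ℕ) < n + 1 := i.isLt
    rw [hA]
    simp only [Fin.ext_iff, Fin.val_succ]
    split_ifs <;> first | (exfalso; (first | assumption | omega)) | (push_cast; ring1)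
  have hsup : ∀ i : Fin (n+1), A i.castSucc i.succ =
      (fun k : ℕ => (d : ℝ) + ((k : ℝ) + 1) * ((d : ℝ) - 1)) (i : ℕ) := by
    intro i
    have hiv : (i : ℕ) < n + 1 := i.isLt
    rw [hA]
    simp only [Fin.ext_iff, Fin.val_succ, Fin.coe_castSucc]
    split_ifs <;> first | (exfalso; (first | assumption | omega)) | (push_cast; ring1)
  -- convert to range products
  have hBprod : ∏ i : Fin (n+1), A i.succ i.succ
      = ((-1 : ℝ) ^ n * ∏ i ∈ Finset.range n, (lam + 1 + ((i : ℝ) + 2) * ((d : ℝ) - 1)))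
        * -(lam + 1 + 0 * ((d : ℝ) - 1)) := by
    calc ∏ i : Fin (n+1), A i.succ i.succ
        = ∏ i ∈ Finset.range (n+1), (fun k : ℕ =>
            if k = n then -(lam + 1 + 0 * ((d : ℝ) - 1))
            else -(lam + 1 + ((k : ℝ) + 2) * ((d : ℝ) - 1))) i := by
          rw [← Fin.prod_univ_eq_prod_range]
          exact Finset.prod_congr rfl fun i _ => hdiag i
      _ = (∏ i ∈ Finset.range n, -(lam + 1 + ((i : ℝ) + 2) * ((d : ℝ) - 1)))
            * -(lam + 1 + 0 * ((d : ℝ) - 1)) := by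
          rw [Finset.prod_range_succ, if_pos rfl]
          congr 1
          refine Finset.prod_congr rfl fun i hi => ?_
          rw [if_neg (by simp at hi; omega)]
      _ = _ := by
          congr 1
          calc ∏ i ∈ Finset.range n, -(lam + 1 + ((i : ℝ) + 2) * ((d : ℝ) - 1))
              = ∏ i ∈ Finset.range n, (-1 : ℝ) * (lam + 1 + ((i : ℝ) + 2) * ((d : ℝ) - 1)) := by
                refine Finset.prod_congr rfl fun i _ => ?_; ring
            _ = _ := by
                rw [Finset.prod_mul_distrib, Finset.prod_const, Finset.card_range]
  have hCprod : ∏ i : Fin (n+1), A i.castSucc i.succ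
      = ∏ i ∈ Finset.range (n+1), ((d : ℝ) + ((i : ℝ) + 1) * ((d : ℝ) - 1)) := by
    rw [← Fin.prod_univ_eq_prod_range]
    exact Finset.prod_congr rfl fun i _ => hsup i
  -- expand target products
  have hT : ∏ i ∈ Finset.range (n+2), (lam + 1 + (i : ℝ) * ((d : ℝ) - 1))
      = ((∏ i ∈ Finset.range n, (lam + 1 + ((i : ℝ) + 2) * ((d : ℝ) - 1)))
          * (lam + 1 + 1 * ((d : ℝ) - 1)))
        * (lam + 1 + 0 * ((d : ℝ) - 1)) := by
    have h1 : ∀ i ∈ Finset.range n,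
        lam + 1 + ((i + 1 + 1 : ℕ) : ℝ) * ((d : ℝ) - 1)
          = lam + 1 + ((i : ℝ) + 2) * ((d : ℝ) - 1) := by
      intro i _; push_cast; ring
    rw [Finset.prod_range_succ', Finset.prod_range_succ', Finset.prod_congr rfl h1]
    push_cast; ring
  have hU : ∏ i ∈ Finset.range (n+2), ((d : ℝ) + (i : ℝ) * ((d : ℝ) - 1))
      = (∏ i ∈ Finset.range (n+1), ((d : ℝ) + ((i : ℝ) + 1) * ((d : ℝ) - 1))) * (d : ℝ) := by
    have h1 : ∀ i ∈ Finset.range (n+1),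
        (d : ℝ) + ((i + 1 : ℕ) : ℝ) * ((d : ℝ) - 1)
          = (d : ℝ) + ((i : ℝ) + 1) * ((d : ℝ) - 1) := by
      intro i _; push_cast; ring
    rw [Finset.prod_range_succ', Finset.prod_congr rfl h1]
    push_cast; ring
  rw [hB, hC, hBprod, hCprod, hA00, hAl0, hT, hU]
  simp only [Fin.val_zero, Fin.val_last]
  rw [show n + 2 = (n + 1) + 1 from rfl, pow_succ, pow_succ]
  ring

/-- Let `b ≥ 2` and `d ≥ 2` be integers, and let `M` be the `b×b` real matrix (rows/columns indexed
`0, …, b-1`, corresponding to `1, …, b`) with `M[i][i] = -((i+1)d-i)` and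
`M[i][i+1] = (i+2)d-(i+1)` for `0 ≤ i ≤ b-2`, `M[b-1][0] = d`, `M[b-1][b-1] = -1`, and all other
entries `0` — the ball replacement matrix of the Pólya urn for `(b,d)`-ary increasing trees.
Then for every real `λ`,
`det(M - λ·I) = (-1)^b·(∏_{i=0}^{b-1}(λ+1+i(d-1)) - ∏_{i=0}^{b-1}(d+i(d-1)))`, which equals
`(-1)^b(d-1)^b·(((λ+1)/(d-1))^{rising b} - (d/(d-1))^{rising b})`. -/
theorem bdary_urn_char_poly (b d : ℕ) (hb : 2 ≤ b) (hd : 2 ≤ d) (lam : ℝ) :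
    (Matrix.det
      ((Matrix.of fun i j : Fin b =>
          if i.val = b - 1 then
            (if j.val = 0 then (d : ℝ) else if j = i then (-1 : ℝ) else 0)
          else if j = i then -(((i.val : ℝ) + 1) * (d : ℝ) - (i.val : ℝ))
          else if j.val = i.val + 1 then ((i.val : ℝ) + 2) * (d : ℝ) - ((i.val : ℝ) + 1)
          else 0)
        - lam • (1 : Matrix (Fin b) (Fin b) ℝ))
      = (-1) ^ b * (∏ i ∈ Finset.range b, (lam + 1 + (i : ℝ) * ((d : ℝ) - 1))
          - ∏ i ∈ Finset.range b, ((d : ℝ) + (i : ℝ) * ((d : ℝ) - 1)))) ∧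
    ((-1 : ℝ) ^ b * (∏ i ∈ Finset.range b, (lam + 1 + (i : ℝ) * ((d : ℝ) - 1))
          - ∏ i ∈ Finset.range b, ((d : ℝ) + (i : ℝ) * ((d : ℝ) - 1)))
      = (-1) ^ b * ((d : ℝ) - 1) ^ b
          * (∏ i ∈ Finset.range b, ((lam + 1) / ((d : ℝ) - 1) + (i : ℝ))
              - ∏ i ∈ Finset.range b, ((d : ℝ) / ((d : ℝ) - 1) + (i : ℝ)))) := by
  obtain ⟨n, rfl⟩ : ∃ n, b = n + 2 := ⟨b - 2, by omega⟩
  constructor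
  · exact aux_det n d lam
  · have hd1 : ((d : ℝ) - 1) ≠ 0 := by
      have : (2 : ℝ) ≤ (d : ℝ) := by exact_mod_cast hd
      linarith
    have e1 : ((d : ℝ) - 1) ^ (n+2) * ∏ i ∈ Finset.range (n+2), ((lam + 1) / ((d : ℝ) - 1) + (i : ℝ))
        = ∏ i ∈ Finset.range (n+2), (lam + 1 + (i : ℝ) * ((d : ℝ) - 1)) := by
      calc ((d : ℝ) - 1) ^ (n+2) * ∏ i ∈ Finset.range (n+2), ((lam + 1) / ((d : ℝ) - 1) + (i : ℝ))
          = (∏ _i ∈ Finset.range (n+2), ((d : ℝ) - 1))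
              * ∏ i ∈ Finset.range (n+2), ((lam + 1) / ((d : ℝ) - 1) + (i : ℝ)) := by
            rw [Finset.prod_const, Finset.card_range]
        _ = ∏ i ∈ Finset.range (n+2), (((d : ℝ) - 1) * ((lam + 1) / ((d : ℝ) - 1) + (i : ℝ))) :=
            (Finset.prod_mul_distrib).symm
        _ = _ := by
            refine Finset.prod_congr rfl fun i _ => ?_
            field_simp
            try ring
    have e2 : ((d : ℝ) - 1) ^ (n+2) * ∏ i ∈ Finset.range (n+2), ((d : ℝ) / ((d : ℝ) - 1) + (i : ℝ))
        = ∏ i ∈ Finset.range (n+2), ((d : ℝ) + (i : ℝ) * ((d : ℝ) - 1)) := by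
      calc ((d : ℝ) - 1) ^ (n+2) * ∏ i ∈ Finset.range (n+2), ((d : ℝ) / ((d : ℝ) - 1) + (i : ℝ))
          = (∏ _i ∈ Finset.range (n+2), ((d : ℝ) - 1))
              * ∏ i ∈ Finset.range (n+2), ((d : ℝ) / ((d : ℝ) - 1) + (i : ℝ)) := by
            rw [Finset.prod_const, Finset.card_range]
        _ = ∏ i ∈ Finset.range (n+2), (((d : ℝ) - 1) * ((d : ℝ) / ((d : ℝ) - 1) + (i : ℝ))) :=
            (Finset.prod_mul_distrib).symm
        _ = _ := by
            refine Finset.prod_congr rfl fun i _ => ?_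
            field_simp
            try ring
    rw [← e1, ← e2]
    ring
end
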